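/- For every p with 0.45 ≤ p ≤ 1, the two-qubit Werner state ρ_p = p|ψ⟩⟨ψ| + ((1−p)/4) I_4 with |ψ⟩ = (|00⟩ + |11⟩)/√2 satisfies r_3(ρ_p) < r_2(ρ_p)², and hence ρ_p is not separable. -/

import Mathlib

open Matrix Kronecker
open scoped ComplexOrder

/-- The realignment `R(M)` of a matrix on `ℂ^n ⊗ ℂ^n`:
`R(M)_{(i,j),(k,l)} = M_{(i,k),(j,l)}`. -/
def realign {n : ℕ} (M : Matrix (Fin n × Fin n) (Fin n × Fin n) ℂ) :
    Matrix (Fin n × Fin n) (Fin n × Fin n) ℂ :=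
  fun p q => M (p.1, q.1) (p.2, q.2)

/-- The `k`-th realignment moment `r_k(ρ) = Tr(Y^k)` where
`Y = (R(ρ) R(ρ)†)^{1/2}` is the positive semidefinite square root of `R(ρ) R(ρ)†`. -/
noncomputable def rMoment {n : ℕ} (ρ : Matrix (Fin n × Fin n) (Fin n × Fin n) ℂ) (k : ℕ) : ℝ :=
  ((((Matrix.posSemidef_self_mul_conjTranspose (realign ρ)).1.eigenvectorUnitary.1 *
      diagonal (((↑) : ℝ → ℂ) ∘ (√·) ∘ (Matrix.posSemidef_self_mul_conjTranspose (realign ρ)).1.eigenvalues) *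
      (star (Matrix.posSemidef_self_mul_conjTranspose (realign ρ)).1.eigenvectorUnitary : Matrix _ _ ℂ)) ^ k).trace).re

/-- A bipartite state on `ℂ^n ⊗ ℂ^n` is separable if it is a finite convex mixture
of tensor products of (trace-one, positive semidefinite) states. -/
def SeparableState {n : ℕ} (ρ : Matrix (Fin n × Fin n) (Fin n × Fin n) ℂ) : Prop :=
  ∃ (T : ℕ) (p : Fin T → ℝ) (σ τ : Fin T → Matrix (Fin n) (Fin n) ℂ),
    (∀ t, 0 ≤ p t) ∧ (∑ t, p t = 1) ∧
    (∀ t, (σ t).PosSemidef ∧ (σ t).trace = 1) ∧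
    (∀ t, (τ t).PosSemidef ∧ (τ t).trace = 1) ∧
    ρ = ∑ t, (p t : ℂ) • (σ t ⊗ₖ τ t)

/-- The maximally entangled two-qubit vector `|ψ⟩ = (|00⟩ + |11⟩)/√2`. -/
noncomputable def psi : Fin 2 × Fin 2 → ℂ :=
  fun a => if a.1 = a.2 then (1 / Real.sqrt 2 : ℝ) else 0

/-- The two-qubit Werner state `ρ_p = p |ψ⟩⟨ψ| + ((1-p)/4) I₄`. -/
noncomputable def werner (p : ℝ) : Matrix (Fin 2 × Fin 2) (Fin 2 × Fin 2) ℂ :=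
  (p : ℂ) • Matrix.vecMulVec psi (star psi) + (((1 - p) / 4 : ℝ) : ℂ) • (1 : Matrix (Fin 2 × Fin 2) (Fin 2 × Fin 2) ℂ)

noncomputable def Wm (p : ℝ) : Matrix (Fin 2 × Fin 2) (Fin 2 × Fin 2) ℂ :=
  fun a b => (((if a = b then p / 2 else 0) +
      (if a.1 = a.2 ∧ b.1 = b.2 then (1 - p) / 4 else 0) : ℝ) : ℂ)

lemma hpsi : ((1 / Real.sqrt 2 : ℝ) : ℂ) * ((1 / Real.sqrt 2 : ℝ) : ℂ) = (1/2 : ℂ) := by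
  have h : (1 / Real.sqrt 2) * (1 / Real.sqrt 2) = (1/2 : ℝ) := by
    rw [div_mul_div_comm, Real.mul_self_sqrt] <;> norm_num
  rw [← Complex.ofReal_mul, h]; norm_num

lemma h2inv : (((Real.sqrt 2 : ℝ) : ℂ))⁻¹ ^ 2 = 1/2 := by
  rw [inv_pow]
  norm_cast
  rw [Real.sq_sqrt] <;> norm_num

lemma h2sq : (((Real.sqrt 2 : ℝ) : ℂ)) ^ 2 = 2 := by
  norm_cast
  rw [Real.sq_sqrt] <;> norm_num

lemma realign_werner (p : ℝ) : realign (werner p) = Wm p := by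
  ext ⟨i, k⟩ ⟨j, l⟩
  simp only [realign, werner, Wm, Matrix.add_apply, Matrix.smul_apply, Matrix.vecMulVec_apply,
    Matrix.one_apply, psi, Pi.star_apply, RCLike.star_def, Complex.conj_ofReal]
  fin_cases i <;> fin_cases k <;> fin_cases j <;> fin_cases l <;>
    simp [Prod.ext_iff, hpsi] <;> push_cast <;> ring_nf <;>
    simp [h2inv, h2sq]

lemma Wm_herm (p : ℝ) : (Wm p).conjTranspose = Wm p := by
  ext a b
  fin_cases a <;> fin_cases b <;>
    simp [Wm, Matrix.conjTranspose_apply, Complex.conj_ofReal, Prod.ext_iff]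

lemma Wm_posSemidef {p : ℝ} (hp0 : 0 ≤ p) (hp1 : p ≤ 1) : (Wm p).PosSemidef := by
  refine Matrix.PosSemidef.of_dotProduct_mulVec_nonneg (Wm_herm p) fun x => ?_
  have hq : dotProduct (star x) ((Wm p) *ᵥ x) =
      (((p/2) * (Complex.normSq (x (0,0)) + Complex.normSq (x (0,1)) +
        Complex.normSq (x (1,0)) + Complex.normSq (x (1,1))) +
       ((1-p)/4) * Complex.normSq (x (0,0) + x (1,1)) : ℝ) : ℂ) := by
    simp only [dotProduct, Matrix.mulVec, Fintype.sum_prod_type, Fin.sum_univ_two,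
      Pi.star_apply, RCLike.star_def, Wm]
    norm_num [Prod.ext_iff]
    push_cast [Complex.normSq_eq_conj_mul_self, map_add]
    ring_nf
  rw [hq]
  have : (0:ℝ) ≤ (p/2) * (Complex.normSq (x (0,0)) + Complex.normSq (x (0,1)) +
        Complex.normSq (x (1,0)) + Complex.normSq (x (1,1))) +
       ((1-p)/4) * Complex.normSq (x (0,0) + x (1,1)) := by
    have := Complex.normSq_nonneg (x (0,0))
    have := Complex.normSq_nonneg (x (0,1))
    have := Complex.normSq_nonneg (x (1,0))
    have := Complex.normSq_nonneg (x (1,1))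
    have := Complex.normSq_nonneg (x (0,0) + x (1,1))
    nlinarith
  exact_mod_cast Complex.zero_le_real.mpr this

open scoped MatrixOrder in
lemma sqrt_eq {p : ℝ} (hp0 : 0 ≤ p) (hp1 : p ≤ 1) :
    ((Matrix.posSemidef_self_mul_conjTranspose (realign (werner p))).1.eigenvectorUnitary.1 *
      diagonal (((↑) : ℝ → ℂ) ∘ (√·) ∘ (Matrix.posSemidef_self_mul_conjTranspose (realign (werner p))).1.eigenvalues) *
      (star (Matrix.posSemidef_self_mul_conjTranspose (realign (werner p))).1.eigenvectorUnitary : Matrix _ _ ℂ)) = Wm p := by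
  calc _ = cfc Real.sqrt (realign (werner p) * (realign (werner p))ᴴ) := by
          rw [(Matrix.posSemidef_self_mul_conjTranspose (realign (werner p))).1.cfc_eq]; rfl
    _ = Wm p := by
      have hW' : 0 ≤ Wm p := Matrix.nonneg_iff_posSemidef.mpr (Wm_posSemidef hp0 hp1)
      rw [realign_werner, Wm_herm, ← cfcₙ_eq_cfc (hf0 := by simp), ← CFC.sqrt_eq_real_sqrt _,
        CFC.sqrt_mul_self _ hW']

lemma trace_Wm_sq (p : ℝ) : ((Wm p ^ 2).trace) = ((3*p^2/4 + 1/4 : ℝ) : ℂ) := by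
  simp only [pow_two, Matrix.trace, Matrix.diag, Matrix.mul_apply, Fintype.sum_prod_type,
    Fin.sum_univ_two, Wm]
  norm_num [Prod.ext_iff]
  push_cast
  ring

lemma trace_Wm_cube (p : ℝ) : ((Wm p ^ 3).trace) = ((3*p^3/8 + 1/8 : ℝ) : ℂ) := by
  rw [pow_succ, pow_two]
  simp only [Matrix.trace, Matrix.diag, Matrix.mul_apply, Fintype.sum_prod_type,
    Fin.sum_univ_two, Wm]
  norm_num [Prod.ext_iff]
  push_cast
  ring

def wv : Fin 2 × Fin 2 → ℂ := fun a => if a = (0,1) then 1 else if a = (1,0) then -1 else 0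

def ptrans (M : Matrix (Fin 2 × Fin 2) (Fin 2 × Fin 2) ℂ) :
    Matrix (Fin 2 × Fin 2) (Fin 2 × Fin 2) ℂ :=
  fun a b => M (a.1, b.2) (b.1, a.2)

lemma kron_conjTranspose (A B : Matrix (Fin 2) (Fin 2) ℂ) : (A ⊗ₖ B)ᴴ = Aᴴ ⊗ₖ Bᴴ := by
  ext a b
  simp [Matrix.conjTranspose_apply, Matrix.kroneckerMap_apply, star_mul', mul_comm]

lemma kron_psd {A B : Matrix (Fin 2) (Fin 2) ℂ} (hA : A.PosSemidef) (hB : B.PosSemidef) :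
    (A ⊗ₖ B).PosSemidef := by
  exact hA.kronecker hB

lemma smul_psd {c : ℝ} (hc : 0 ≤ c) {M : Matrix (Fin 2 × Fin 2) (Fin 2 × Fin 2) ℂ}
    (hM : M.PosSemidef) : ((c : ℂ) • M).PosSemidef := by
  refine Matrix.PosSemidef.of_dotProduct_mulVec_nonneg ?_ ?_
  · show ((c : ℂ) • M)ᴴ = _
    rw [Matrix.conjTranspose_smul, hM.1]
    congr 1
    simp [Complex.conj_ofReal]
  · intro x
    rw [Matrix.smul_mulVec, dotProduct_smul, smul_eq_mul]
    exact mul_nonneg (by exact_mod_cast Complex.zero_le_real.mpr hc) (hM.dotProduct_mulVec_nonneg x)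

lemma sum_psd {T : ℕ} (f : Fin T → Matrix (Fin 2 × Fin 2) (Fin 2 × Fin 2) ℂ)
    (hf : ∀ t, (f t).PosSemidef) : (∑ t, f t).PosSemidef :=
  Finset.sum_induction f Matrix.PosSemidef (fun _ _ h1 h2 => h1.add h2)
    Matrix.PosSemidef.zero (fun t _ => hf t)

lemma ptrans_sum {T : ℕ} (p : Fin T → ℝ) (σ τ : Fin T → Matrix (Fin 2) (Fin 2) ℂ) :
    ptrans (∑ t, (p t : ℂ) • (σ t ⊗ₖ τ t)) = ∑ t, (p t : ℂ) • (σ t ⊗ₖ (τ t)ᵀ) := by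
  ext a b
  simp [ptrans, Matrix.sum_apply, Matrix.kroneckerMap_apply, Matrix.transpose_apply]

lemma pt_werner (p : ℝ) :
    dotProduct (star wv) (ptrans (werner p) *ᵥ wv) = (((1 - 3*p)/2 : ℝ) : ℂ) := by
  simp only [dotProduct, Matrix.mulVec, Fintype.sum_prod_type, Fin.sum_univ_two,
    Pi.star_apply, wv, ptrans, werner, Matrix.add_apply, Matrix.smul_apply,
    Matrix.vecMulVec_apply, Matrix.one_apply, psi, Pi.star_apply, RCLike.star_def,
    Complex.conj_ofReal]
  norm_num [Prod.ext_iff, hpsi]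
  rw [show (((Real.sqrt 2 : ℝ) : ℂ))⁻¹ * (((Real.sqrt 2 : ℝ) : ℂ))⁻¹ = 1/2 by
    rw [← sq, h2inv]]
  ring

lemma not_sep {p : ℝ} (hp : 0.45 ≤ p) : ¬ SeparableState (werner p) := by
  rintro ⟨T, q, σ, τ, hq0, hq1, hσ, hτ, hρ⟩
  have hpsd : (ptrans (werner p)).PosSemidef := by
    rw [hρ, ptrans_sum]
    exact sum_psd _ fun t => smul_psd (hq0 t) (kron_psd (hσ t).1 ((hτ t).1.transpose))
  have h0 := hpsd.dotProduct_mulVec_nonneg wv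
  rw [pt_werner] at h0
  have : (0:ℝ) ≤ (1 - 3*p)/2 := by exact_mod_cast Complex.zero_le_real.mp h0
  linarith

/-- For every `0.45 ≤ p ≤ 1`, the two-qubit Werner state violates the realignment-moment
criterion, `r_3(ρ_p) < r_2(ρ_p)²`, and hence `ρ_p` is not separable. -/
theorem werner_violates_criterion_not_separable (p : ℝ) (hp0 : 0.45 ≤ p) (hp1 : p ≤ 1) :
    rMoment (werner p) 3 < rMoment (werner p) 2 ^ 2 ∧ ¬ SeparableState (werner p) := by
  have h0 : (0:ℝ) ≤ p := by linarith
  constructor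
  · unfold rMoment
    rw [sqrt_eq h0 hp1, trace_Wm_cube, trace_Wm_sq, Complex.ofReal_re, Complex.ofReal_re]
    nlinarith [sq_nonneg (p - 0.45), sq_nonneg p, sq_nonneg (p - 1), sq_nonneg (p*p - p),
      mul_nonneg (mul_nonneg h0 h0) h0, sq_nonneg (3*p^2 - p)]
  · exact not_sep hp0
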